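/- arXiv:2509.00363 — 5 statements merged into one kernel-verified Lean document; each statement's English description precedes it below -/
import Mathlib

section
/- For every natural number n, the ring ℤ/⟨2^n⟩ is n-Noetherian. -/
open Ordinal

/-- A list is good ((-1)-good) if it is nonempty and its last entry lies in the
submodule generated by the preceding entries. -/
def GoodList (A : Type*) {M : Type*} [Ring A] [AddCommGroup M] [Module A M]
    (σ : List M) : Prop :=
  ∃ (l : List M) (x : M), σ = l ++ [x] ∧ x ∈ Submodule.span A {y | y ∈ l}

/-- A list `σ` is `α`-good if for every `x`, the appended list `σ.x` is either good
((-1)-good) or `β`-good for some ordinal `β < α`.  A module `M` is `α`-Noetherian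
if the empty list `[] : List M` is `α`-good; a ring is `α`-Noetherian if it is
`α`-Noetherian as a left module over itself. -/
def AlphaGood (A : Type*) {M : Type*} [Ring A] [AddCommGroup M] [Module A M]
    (α : Ordinal) (σ : List M) : Prop :=
  ∀ x : M, GoodList A (σ ++ [x]) ∨ ∃ (β : Ordinal) (_ : β < α), AlphaGood A β (σ ++ [x])
termination_by α
/-
In a finite module, a submodule strictly containing another is at least twice as large
(Lagrange). So if `|M| ≤ 2^k |⟨σ⟩|`, every `x ∉ ⟨σ⟩` gives `|M| ≤ 2^(k-1) |⟨σ.x⟩|`, while for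
`k = 0` no such `x` exists; by induction on `k` the list `σ` is `k`-good. For `M = ℤ/⟨2^n⟩`
and the empty list this is `2^n ≤ 2^n · 1`.
-/

open Submodule

theorem AddSubgroup.two_mul_card_le_card_of_lt {G : Type*} [AddGroup G] [Finite G]
    {H K : AddSubgroup G} (h : H < K) : 2 * Nat.card H ≤ Nat.card K := by
  have : H.IsFiniteRelIndex K := AddSubgroup.isFiniteRelIndex_of_finiteIndex
  have hne_zero : H.relIndex K ≠ 0 := AddSubgroup.relIndex_ne_zero
  have hne_one : H.relIndex K ≠ 1 := AddSubgroup.relIndex_eq_one.not.mpr h.not_ge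
  rw [← AddSubgroup.relIndex_bot_left, ← AddSubgroup.relIndex_bot_left,
    ← AddSubgroup.relIndex_mul_relIndex ⊥ H K bot_le h.le, mul_comm]
  exact Nat.mul_le_mul_left _ (by omega)

section

variable {A M : Type*} [Ring A] [AddCommGroup M] [Module A M]

theorem Submodule.span_lt_span_append_singleton {σ : List M} {x : M}
    (hx : x ∉ span A {y | y ∈ σ}) : span A {y | y ∈ σ} < span A {y | y ∈ σ ++ [x]} := by
  have hset : {y | y ∈ σ ++ [x]} = insert x {y | y ∈ σ} := by ext; simp [or_comm]
  rw [hset, span_insert, sup_comm, left_lt_sup, span_singleton_le_iff_mem]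
  exact hx

theorem goodList_append_singleton_or_two_mul_card_span_le [Finite M] (σ : List M) (x : M) :
    GoodList A (σ ++ [x]) ∨
      2 * Nat.card (span A {y | y ∈ σ}) ≤ Nat.card (span A {y | y ∈ σ ++ [x]}) := by
  by_cases hx : x ∈ span A {y | y ∈ σ}
  · exact Or.inl ⟨σ, x, rfl, hx⟩
  · have hdouble := AddSubgroup.two_mul_card_le_card_of_lt <|
      toAddSubgroup_strictMono (span_lt_span_append_singleton (A := A) hx)
    exact Or.inr hdouble

theorem alphaGood_of_card_le_two_pow_mul_card_span [Finite M] (k : ℕ) {σ : List M}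
    (hσ : Nat.card M ≤ 2 ^ k * Nat.card (span A {y | y ∈ σ})) : AlphaGood A k σ := by
  induction k generalizing σ with
  | zero =>
    rw [AlphaGood]
    intro x
    refine (goodList_append_singleton_or_two_mul_card_span_le σ x).imp_right fun hdouble => ?_
    have hle : Nat.card (span A {y | y ∈ σ ++ [x]}) ≤ Nat.card M :=
      Nat.card_le_card_of_injective _ Subtype.val_injective
    have hpos : 0 < Nat.card (span A {y | y ∈ σ}) := Nat.card_pos
    rw [pow_zero, one_mul] at hσ
    omega
  | succ k ih =>
    rw [AlphaGood]
    intro x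
    refine (goodList_append_singleton_or_two_mul_card_span_le σ x).imp_right fun hdouble => ?_
    refine ⟨k, by exact_mod_cast k.lt_succ_self, ih ?_⟩
    calc Nat.card M ≤ 2 ^ (k + 1) * Nat.card (span A {y | y ∈ σ}) := hσ
      _ = 2 ^ k * (2 * Nat.card (span A {y | y ∈ σ})) := by ring
      _ ≤ 2 ^ k * Nat.card (span A {y | y ∈ σ ++ [x]}) := Nat.mul_le_mul_left _ hdouble

end

/-- For every natural number `n`, the ring `ℤ/⟨2^n⟩` is `n`-Noetherian. -/
theorem zmod_two_pow_noetherian (n : ℕ) :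
    AlphaGood (ZMod (2 ^ n)) (n : Ordinal) ([] : List (ZMod (2 ^ n))) := by
  apply alphaGood_of_card_le_two_pow_mul_card_span
  simp
end

section
/- For every natural number n and discrete field K, the ring K[X]/⟨X^n⟩ is n-Noetherian. -/
open Ordinal

/-! In `K[X]/⟨X^n⟩` every element is a unit multiple of a power of `X`, so its ideals form the
chain `(1) ⊋ (X) ⊋ ⋯ ⊋ (X^n) = 0`. A list whose span contains `(X^k)` is then `k`-good: an element
outside that span is associated to some `X^j` with `j < k`, and appending it makes the span
contain `(X^j)`. -/

theorem AlphaGood.of_le_span {A M : Type*} [Ring A] [AddCommGroup M] [Module A M]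
    (N : ℕ → Submodule A M)
    (hN : ∀ k x, x ∉ N k → ∃ j < k, N j ≤ Submodule.span A {x})
    (k : ℕ) (σ : List M) (hσ : N k ≤ Submodule.span A {y | y ∈ σ}) :
    AlphaGood A k σ := by
  induction k using Nat.strong_induction_on generalizing σ with
  | _ k ih =>
    rw [AlphaGood]
    intro x
    by_cases hx : x ∈ Submodule.span A {y | y ∈ σ}
    · exact Or.inl ⟨σ, x, rfl, hx⟩
    obtain ⟨j, hjk, hj⟩ := hN k x fun h => hx (hσ h)
    have hspan : Submodule.span A {x} ≤ Submodule.span A {y | y ∈ σ ++ [x]} :=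
      Submodule.span_mono (Set.singleton_subset_iff.mpr (by simp))
    exact Or.inr ⟨j, Nat.cast_lt.mpr hjk, ih j hjk _ (hj.trans hspan)⟩

theorem alphaGood_nil_of_forall_associated_pow {S : Type*} [CommRing S] (t : S) (n : ℕ)
    (ht : t ^ n = 0) (hS : ∀ x : S, ∃ j, Associated (t ^ j) x) :
    AlphaGood S n ([] : List S) := by
  refine AlphaGood.of_le_span (fun k => Ideal.span {t ^ k}) ?_ n [] (by simp [ht])
  intro k x hx
  obtain ⟨j, hj⟩ := hS x
  have hjk : j < k := by
    by_contra! hkj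
    exact hx (Ideal.mem_span_singleton.mpr ((pow_dvd_pow t hkj).trans hj.dvd))
  exact ⟨j, hjk, Ideal.span_singleton_le_span_singleton.mpr hj.symm.dvd⟩

section PrimePowerQuotient

variable {R : Type*} [CommRing R] [IsPrincipalIdealRing R] {π : R}

theorem isUnit_mk_span_pow_of_not_dvd (hπ : Irreducible π) (n : ℕ) {q : R} (hq : ¬π ∣ q) :
    IsUnit (Ideal.Quotient.mk (Ideal.span {π ^ n}) q) := by
  have := PrincipalIdealRing.isMaximal_of_irreducible hπ
  rw [← Ideal.span_singleton_pow]
  exact Ideal.Quotient.isUnit_mk_pow_of_notMem _ (mt Ideal.mem_span_singleton.mp hq)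

theorem exists_associated_mk_pow [IsDomain R] (hπ : Irreducible π) (n : ℕ)
    (x : R ⧸ Ideal.span {π ^ n}) :
    ∃ j, Associated (Ideal.Quotient.mk _ π ^ j) x := by
  obtain ⟨p, rfl⟩ := Ideal.Quotient.mk_surjective x
  rcases eq_or_ne p 0 with rfl | hp
  · exact ⟨n, by rw [← map_pow, Ideal.Quotient.mk_singleton_self, map_zero]⟩
  obtain ⟨j, q, hq, rfl⟩ := WfDvdMonoid.max_power_factor hp hπ
  refine ⟨j, ?_⟩
  rw [map_mul, map_pow]
  exact associated_mul_unit_right _ _ (isUnit_mk_span_pow_of_not_dvd hπ n hq)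

end PrimePowerQuotient

set_option synthInstance.maxHeartbeats 1000000 in
theorem quotient_X_pow_noetherian_general (n : ℕ) (K : Type*) [Field K] :
    AlphaGood (Polynomial K ⧸ Ideal.span {(Polynomial.X : Polynomial K) ^ n}) (n : Ordinal)
      ([] : List (Polynomial K ⧸ Ideal.span {(Polynomial.X : Polynomial K) ^ n})) :=
  alphaGood_nil_of_forall_associated_pow _ n
    (by rw [← map_pow, Ideal.Quotient.mk_singleton_self])
    (exists_associated_mk_pow Polynomial.irreducible_X n)

set_option synthInstance.maxHeartbeats 1000000 in
/-- For every natural number `n` and discrete field `K`, the ring `K[X]/⟨X^n⟩` is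
`n`-Noetherian. -/
theorem quotient_X_pow_noetherian (n : ℕ) (K : Type*) [Field K] [DecidableEq K] :
    AlphaGood (Polynomial K ⧸ Ideal.span {(Polynomial.X : Polynomial K) ^ n}) (n : Ordinal)
      ([] : List (Polynomial K ⧸ Ideal.span {(Polynomial.X : Polynomial K) ^ n})) :=
  quotient_X_pow_noetherian_general n K
end

section
/- The ring of integers ℤ is ω-Noetherian. -/
/-!
Whether `σ.x` is (-1)-good depends only on whether `x` lies in the span of `σ`. In `ℤ`, if the
span of `σ` is `(n)` with `n > 0`, then `σ` is `n`-good: an `x ∉ (n)` enlarges the span to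
`(gcd n x)` with `gcd n x < n`, so strong induction on `n` applies. Every nonzero `x` gives a
one-element list spanning `(|x|)`, hence `[]` is `ω`-good.
-/

open Ordinal

section

variable {A M : Type*} [Ring A] [AddCommGroup M] [Module A M]

theorem goodList_append_singleton_iff (σ : List M) (x : M) :
    GoodList A (σ ++ [x]) ↔ x ∈ Submodule.span A {y | y ∈ σ} := by
  constructor
  · rintro ⟨l, z, hl, hz⟩
    obtain ⟨rfl, hxz⟩ := List.append_inj' hl rfl
    rwa [List.singleton_inj.mp hxz]
  · exact fun hx => ⟨σ, x, rfl, hx⟩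

theorem span_append_singleton (σ : List M) (x : M) :
    Submodule.span A {y | y ∈ σ ++ [x]} = Submodule.span A {y | y ∈ σ} ⊔ A ∙ x := by
  rw [← Submodule.span_union]
  congr 1
  ext y
  simp [or_comm]

theorem alphaGood_iff (α : Ordinal) (σ : List M) :
    AlphaGood A α σ ↔ ∀ x ∉ Submodule.span A {y | y ∈ σ},
      ∃ β < α, AlphaGood A β (σ ++ [x]) := by
  rw [AlphaGood]
  simp only [goodList_append_singleton_iff, exists_prop]
  exact forall_congr' fun x => or_iff_not_imp_left

end

theorem Int.alphaGood_of_span_eq_span_singleton (n : ℕ) (hn : 0 < n) (σ : List ℤ)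
    (hσ : Submodule.span ℤ {y | y ∈ σ} = Ideal.span {(n : ℤ)}) :
    AlphaGood ℤ n σ := by
  induction n using Nat.strong_induction_on generalizing σ with
  | _ n ih =>
  rw [alphaGood_iff]
  intro x hx
  rw [hσ, Ideal.mem_span_singleton] at hx
  have hgcd_lt : Int.gcd n x < n :=
    lt_of_le_of_ne (Nat.le_of_dvd hn (Nat.gcd_dvd_left _ _)) fun h =>
      hx (h ▸ Int.gcd_dvd_right ..)
  refine ⟨Int.gcd n x, Nat.cast_lt.mpr hgcd_lt,
    ih _ hgcd_lt (Int.gcd_pos_of_ne_zero_left _ (by omega)) _ ?_⟩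
  rw [span_append_singleton, hσ, Ideal.submodule_span_eq, ← Ideal.span_insert, Int.coe_gcd,
    span_gcd]

/-- The ring of integers `ℤ` is `ω`-Noetherian. -/
theorem int_omega_noetherian :
    AlphaGood ℤ Ordinal.omega0 ([] : List ℤ) := by
  rw [alphaGood_iff]
  intro x hx
  have hx0 : x ≠ 0 := by rintro rfl; exact hx (zero_mem _)
  have hspan : Submodule.span ℤ {y | y ∈ [] ++ [x]} = Ideal.span {(x.natAbs : ℤ)} := by
    simp [Ideal.submodule_span_eq]
  exact ⟨x.natAbs, natCast_lt_omega0 _,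
    Int.alphaGood_of_span_eq_span_singleton _ (Int.natAbs_pos.mpr hx0) _ hspan⟩
end

section
/- Let M be a module over a ring A, α an ordinal, and σ a finite list of elements of M. If the submodule generated by σ contains an α-Euclidean element, then σ is α-good. -/
open Ordinal

/-- `x : M` is `α`-Euclidean if for every `y : M` there is a `z` which is either
`(-1)`-Euclidean (i.e. `z = 0`) or `β`-Euclidean for some ordinal `β < α`, with
`z - y ∈ ⟨x⟩`.  A module is `α`-Euclidean if every element is `(-1)`-Euclidean
(i.e. zero) or `β`-Euclidean for some `β < α`; a ring is `α`-Euclidean if it is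
so as a left module over itself. -/
def AlphaEuclidean (A : Type*) {M : Type*} [Ring A] [AddCommGroup M] [Module A M]
    (α : Ordinal) (x : M) : Prop :=
  ∀ y : M, (∃ z : M, z = 0 ∧ z - y ∈ Submodule.span A {x}) ∨
    ∃ (β : Ordinal) (_ : β < α), ∃ z : M, AlphaEuclidean A β z ∧ z - y ∈ Submodule.span A {x}
termination_by α

theorem mem_span_append_singleton_of_sub_mem {A M : Type*} [Ring A] [AddCommGroup M]
    [Module A M] {σ : List M} {y z : M} (h : z - y ∈ Submodule.span A {w | w ∈ σ}) :
    z ∈ Submodule.span A {w | w ∈ σ ++ [y]} := by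
  have hσ : Submodule.span A {w | w ∈ σ} ≤ Submodule.span A {w | w ∈ σ ++ [y]} :=
    Submodule.span_mono fun w hw => List.mem_append_left _ hw
  have hy : y ∈ Submodule.span A {w | w ∈ σ ++ [y]} := Submodule.subset_span (by simp)
  simpa using add_mem (hσ h) hy

/-- If the submodule generated by a list `σ` contains an `α`-Euclidean element,
then `σ` is `α`-good. -/
theorem alphaGood_of_mem_span_alphaEuclidean {A M : Type*} [Ring A] [AddCommGroup M]
    [Module A M] (α : Ordinal) (σ : List M) (x : M)
    (hx : x ∈ Submodule.span A {y | y ∈ σ}) (hE : AlphaEuclidean A α x) :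
    AlphaGood A α σ := by
  induction α using WellFoundedLT.induction generalizing σ x with
  | _ α ih =>
    have hxσ : Submodule.span A {x} ≤ Submodule.span A {w | w ∈ σ} :=
      (Submodule.span_singleton_le_iff_mem x _).mpr hx
    rw [AlphaGood]
    intro y
    rw [AlphaEuclidean] at hE
    -- Reduce `y` modulo `⟨x⟩ ≤ ⟨σ⟩`: a zero remainder puts `y` in `⟨σ⟩`, while a
    -- `β`-Euclidean remainder lies in `⟨σ.y⟩`, so induction applies to `σ.y`.
    rcases hE y with ⟨_, rfl, h0y⟩ | ⟨β, hβ, z, hz, hzy⟩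
    · exact Or.inl ⟨σ, y, rfl, by simpa using neg_mem (hxσ h0y)⟩
    · exact Or.inr ⟨β, hβ, ih β hβ _ z (mem_span_append_singleton_of_sub_mem (hxσ hzy)) hz⟩
end

section
/- Let M be a module over a ring A, α an ordinal, f : [0,α) → M a function, and β ∈ [-1,α). If there exist n ∈ ℕ and a strictly decreasing sequence α_0 > ... > α_{n-1} in (β, α] such that the list [f(α_0),...,f(α_{n-1})] is β-good, then there exist m ∈ ℕ and a strictly decreasing sequence α_n > ... > α_{n+m-1} in [0, α_{n-1}) such that [f(α_0),...,f(α_{n+m-1})] is good (i.e., the last entry lies in the submodule generated by the previous entries). -/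
open Ordinal

/-- `BGood A β σ` for `β : WithBot Ordinal` means: `σ` is `β`-good, where
`⊥` plays the role of `-1` (so `BGood A ⊥ σ` means `σ` is good). -/
def BGood (A : Type*) {M : Type*} [Ring A] [AddCommGroup M] [Module A M]
    (β : WithBot Ordinal) (σ : List M) : Prop :=
  WithBot.recBotCoe (GoodList A σ) (fun γ => AlphaGood A γ σ) β

/-!
Appending `f γ` to a `γ`-good list gives either a good list or a `δ`-good list for some
`δ < γ`; in the second case append `f δ` next, and so on. The appended indices `γ > δ > ⋯`
lie below all earlier ones, and they cannot decrease forever, so the process ends with a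
good list.
-/

section

variable {A M : Type*} [Ring A] [AddCommGroup M] [Module A M]

theorem AlphaGood.exists_append_goodList {γ : Ordinal} (f : Ordinal → M) {L : List Ordinal}
    (hL : L.Pairwise (· > ·)) (hγ : ∀ x ∈ L, γ < x) (h : AlphaGood A γ (L.map f)) :
    ∃ T : List Ordinal, (∀ y ∈ T, y ≤ γ) ∧ (L ++ T).Pairwise (· > ·) ∧
      GoodList A ((L ++ T).map f) := by
  induction γ using WellFoundedLT.induction generalizing L with
  | _ γ IH =>
  have hLγ : (L ++ [γ]).Pairwise (· > ·) := by
    simpa [List.pairwise_append, hL] using hγ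
  rw [AlphaGood] at h
  rcases h (f γ) with hgood | ⟨δ, hδγ, hδ⟩
  · exact ⟨[γ], by simp, hLγ, by simpa using hgood⟩
  · have hδ' : ∀ x ∈ L ++ [γ], δ < x := by
      simpa [or_imp, forall_and, hδγ] using fun x hx => hδγ.trans (hγ x hx)
    obtain ⟨T, hTδ, hanti, hgood⟩ := IH δ hδγ hLγ hδ' (by simpa using hδ)
    refine ⟨γ :: T, ?_, by simpa using hanti, by simpa using hgood⟩
    simpa using fun y hy => (hTδ y hy).trans hδγ.le

theorem BGood.exists_append_goodList {β : WithBot Ordinal} (f : Ordinal → M)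
    {L : List Ordinal} (hL : L.Pairwise (· > ·)) (hβ : ∀ x ∈ L, β < x)
    (h : BGood A β (L.map f)) :
    ∃ T : List Ordinal, (∀ y ∈ T, (y : WithBot Ordinal) ≤ β) ∧ (L ++ T).Pairwise (· > ·) ∧
      GoodList A ((L ++ T).map f) := by
  cases β with
  | bot => exact ⟨[], by simp, by simpa using hL, by rw [List.append_nil]; exact h⟩
  | coe γ =>
    obtain ⟨T, hTγ, hanti, hgood⟩ :=
      AlphaGood.exists_append_goodList f hL (by simpa using hβ) h
    exact ⟨T, by simpa using hTγ, hanti, hgood⟩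

end

/-- If `[f α₀, …, f αₙ₋₁]` is `β`-good for a strictly decreasing sequence
`α₀ > … > αₙ₋₁` in `(β, α]` (with `β ∈ [-1, α)`), then the sequence can be
extended by a strictly decreasing sequence of ordinals in `[0, αₙ₋₁)` (in
particular in `[0, α)`) so that the corresponding list of values of `f` is good. -/
theorem extend_to_good_list {A M : Type*} [Ring A] [AddCommGroup M] [Module A M]
    (α : Ordinal) (f : Ordinal → M) (β : WithBot Ordinal) (hβ : β < (α : WithBot Ordinal))
    (n : ℕ) (g : Fin n → Ordinal) (hg : StrictAnti g)
    (hrange : ∀ i : Fin n, β < (g i : WithBot Ordinal) ∧ g i ≤ α)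
    (hgood : BGood A β (List.ofFn fun i => f (g i))) :
    ∃ (m : ℕ) (g' : Fin (n + m) → Ordinal),
      (∀ i : Fin n, g' (Fin.castAdd m i) = g i) ∧ StrictAnti g' ∧
      (∀ j : Fin m, g' (Fin.natAdd n j) < α) ∧
      GoodList A (List.ofFn fun i => f (g' i)) := by
  have hL : (List.ofFn g).Pairwise (· > ·) := List.pairwise_ofFn.2 hg
  obtain ⟨T, hTβ, hanti, hTgood⟩ := BGood.exists_append_goodList f hL
    (by simpa [List.mem_ofFn] using fun i => (hrange i).1) (by rwa [List.map_ofFn])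
  have hofFn : List.ofFn (Fin.append g T.get) = List.ofFn g ++ T := by
    rw [List.ofFn_fin_append, List.ofFn_get]
  refine ⟨T.length, Fin.append g T.get, Fin.append_left g T.get, ?_, fun j => ?_, ?_⟩
  · exact List.pairwise_ofFn.1 (hofFn ▸ hanti)
  · rw [Fin.append_right]
    exact WithBot.coe_lt_coe.1 ((hTβ _ (List.get_mem T j)).trans_lt hβ)
  · rwa [← hofFn, List.map_ofFn] at hTgood
end
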